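/- Let q : ℝ → ℝ be measurable with ∫₀^π q(t)² dt < ∞, let h, H, H₁, H₂ ∈ ℝ with ρ := H·H₁ − H₂ > 0. Suppose ψ : [0,π] × ℝ → ℝ is such that for every λ ∈ ℝ, ψ(·,λ) is a solution of −y'' + q y = λ y on [0,π] with ψ(π,λ) = −λ + H₁ and ∂ₓψ(π,λ) = λ·H − H₂, and define χ(λ) := ∂ₓψ(0,λ) − h·ψ(0,λ). Let λₙ ∈ ℝ, kₙ ≠ 0, and let φₙ be a solution of −y'' + q y = λₙ y on [0,π] with φₙ(0) = 1, φₙ'(0) = h and ψ(x,λₙ) = kₙ·φₙ(x) for all x ∈ [0,π]. If the map λ ↦ ∫₀^π ψ(x,λ)·φₙ(x) dx is continuous at λₙ, then χ is differentiable at λₙ with derivative χ'(λₙ) = kₙ·γₙ, where γₙ := ∫₀^π φₙ(x)² dx + (φₙ'(π) + H·φₙ(π))²/ρ. -/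

import Mathlib

/-!
Lagrange's identity for Carathéodory solutions (the fundamental theorem of calculus for the
absolutely continuous Wronskian `ψ' φ - ψ φ'`), combined with the boundary conditions at `π` and
at `0`, gives
`χ λ = χ λₙ + (λ - λₙ) (H φₙ(π) + φₙ'(π) + ∫₀^π ψ(x, λ) φₙ(x) dx)`.
The bracket is continuous at `λₙ`, so it is the derivative there. At `λₙ`, `ψ(·, λₙ) = kₙ φₙ`
turns the conditions at `π` into `kₙ (φₙ'(π) + H φₙ(π)) = ρ`, and the bracket becomes `kₙ γₙ`.
-/

open Real MeasureTheory Set intervalIntegral Filter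
open scoped Interval

/-- `y` (with derivative `y'`) is a solution of `-y'' + q y = λ y` on `[0, π]`
in the Carathéodory sense. -/
def IsSol (q : ℝ → ℝ) (lam : ℝ) (y y' : ℝ → ℝ) : Prop :=
  ContinuousOn y' (Set.Icc 0 π) ∧
  (∀ x ∈ Set.Icc (0:ℝ) π, HasDerivAt y (y' x) x) ∧
  ∀ x ∈ Set.Icc (0:ℝ) π, y' x = y' 0 + ∫ t in (0:ℝ)..x, (q t - lam) * y t

theorem AbsolutelyContinuousOnInterval.congr {X : Type*} [PseudoMetricSpace X] {f g : ℝ → X}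
    {a b : ℝ}
    (hf : AbsolutelyContinuousOnInterval f a b) (hfg : EqOn f g (uIcc a b)) :
    AbsolutelyContinuousOnInterval g a b := by
  refine Tendsto.congr' (eventually_inf_principal.2 (Eventually.of_forall fun E hE => ?_)) hf
  refine Finset.sum_congr rfl fun i hi => ?_
  rw [hfg (hE.1 i hi).1, hfg (hE.1 i hi).2]

theorem IntervalIntegrable.absolutelyContinuousOnInterval_of_eq_add_integral {f g : ℝ → ℝ}
    {a b : ℝ} (hg : IntervalIntegrable g volume a b)
    (hf : ∀ x ∈ uIcc a b, f x = f a + ∫ t in a..x, g t) :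
    AbsolutelyContinuousOnInterval f a b := by
  have hconst : AbsolutelyContinuousOnInterval (fun _ => f a) a b :=
    (LipschitzWith.const (f a)).lipschitzOnWith.absolutelyContinuousOnInterval
  exact (hconst.fun_add (hg.absolutelyContinuousOnInterval_intervalIntegral left_mem_uIcc)).congr
    fun x hx => (hf x hx).symm

theorem IntervalIntegrable.ae_hasDerivAt_of_eq_add_integral {f g : ℝ → ℝ} {a b : ℝ}
    (hab : a ≤ b) (hg : IntervalIntegrable g volume a b)
    (hf : ∀ x ∈ Icc a b, f x = f a + ∫ t in a..x, g t) :
    ∀ᵐ x, x ∈ Ι a b → HasDerivAt f (g x) x := by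
  have hb : ∀ᵐ x, x ≠ b := by simp [ae_iff, measure_singleton]
  filter_upwards [hg.ae_hasDerivAt_integral, hb] with x hderiv hxb hx
  rw [uIoc_of_le hab] at hx
  have hx' : x ∈ Ioo a b := ⟨hx.1, lt_of_le_of_ne hx.2 hxb⟩
  refine ((hderiv (uIcc_of_le hab ▸ Ioc_subset_Icc_self hx) a left_mem_uIcc).const_add
    (f a)).congr_of_eventuallyEq ?_
  filter_upwards [Ioo_mem_nhds hx'.1 hx'.2] with u hu using hf u (Ioo_subset_Icc_self hu)

theorem hasDerivAt_of_eq_add_sub_mul {𝕜 : Type*} [NontriviallyNormedField 𝕜] {f G : 𝕜 → 𝕜}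
    {a : 𝕜} (hG : ContinuousAt G a) (hf : ∀ x, f x = f a + (x - a) * G x) :
    HasDerivAt f (G a) a := by
  rw [hasDerivAt_iff_tendsto_slope]
  refine hG.tendsto.mono_left nhdsWithin_le_nhds |>.congr' ?_
  filter_upwards [self_mem_nhdsWithin] with x hx
  rw [slope_def_field, hf x, add_sub_cancel_left, mul_div_cancel_left₀ _ (sub_ne_zero.2 hx)]

namespace IsSol

variable {q y y' : ℝ → ℝ} {lam : ℝ}

theorem continuousOn (hy : IsSol q lam y y') : ContinuousOn y (Icc 0 π) :=
  fun x hx => (hy.2.1 x hx).continuousAt.continuousWithinAt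

theorem intervalIntegrable_deriv (hy : IsSol q lam y y') : IntervalIntegrable y' volume 0 π :=
  hy.1.intervalIntegrable_of_Icc pi_pos.le

theorem intervalIntegrable_potential_mul (hq : IntervalIntegrable q volume 0 π)
    (hy : IsSol q lam y y') : IntervalIntegrable (fun t => (q t - lam) * y t) volume 0 π :=
  (hq.sub intervalIntegrable_const).mul_continuousOn (uIcc_of_le pi_pos.le ▸ hy.continuousOn)

theorem eq_add_integral_deriv (hy : IsSol q lam y y') :
    ∀ x ∈ Icc 0 π, y x = y 0 + ∫ t in (0:ℝ)..x, y' t := by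
  intro x hx
  have hsub : uIcc 0 x ⊆ Icc 0 π := uIcc_of_le hx.1 ▸ Icc_subset_Icc_right hx.2
  rw [integral_eq_sub_of_hasDerivAt (fun t ht => hy.2.1 t (hsub ht))
    (hy.intervalIntegrable_deriv.mono_set (uIcc_of_le pi_pos.le ▸ hsub)), add_sub_cancel]

theorem absolutelyContinuousOnInterval (hy : IsSol q lam y y') :
    AbsolutelyContinuousOnInterval y 0 π :=
  hy.intervalIntegrable_deriv.absolutelyContinuousOnInterval_of_eq_add_integral
    (uIcc_of_le pi_pos.le ▸ hy.eq_add_integral_deriv)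

theorem absolutelyContinuousOnInterval_deriv (hq : IntervalIntegrable q volume 0 π)
    (hy : IsSol q lam y y') : AbsolutelyContinuousOnInterval y' 0 π :=
  (hy.intervalIntegrable_potential_mul hq).absolutelyContinuousOnInterval_of_eq_add_integral
    (uIcc_of_le pi_pos.le ▸ hy.2.2)

theorem ae_hasDerivAt_deriv (hq : IntervalIntegrable q volume 0 π) (hy : IsSol q lam y y') :
    ∀ᵐ x, x ∈ Ι 0 π → HasDerivAt y' ((q x - lam) * y x) x :=
  (hy.intervalIntegrable_potential_mul hq).ae_hasDerivAt_of_eq_add_integral pi_pos.le hy.2.2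

theorem wronskian_sub {z z' : ℝ → ℝ} {mu : ℝ} (hq : IntervalIntegrable q volume 0 π)
    (hy : IsSol q lam y y') (hz : IsSol q mu z z') :
    (y' π * z π - y π * z' π) - (y' 0 * z 0 - y 0 * z' 0)
      = (mu - lam) * ∫ x in (0:ℝ)..π, y x * z x := by
  have hW : AbsolutelyContinuousOnInterval (fun x => y' x * z x - y x * z' x) 0 π :=
    ((hy.absolutelyContinuousOnInterval_deriv hq).fun_mul
      hz.absolutelyContinuousOnInterval).fun_sub
      (hy.absolutelyContinuousOnInterval.fun_mul (hz.absolutelyContinuousOnInterval_deriv hq))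
  rw [← hW.integral_deriv_eq_sub, ← intervalIntegral.integral_const_mul]
  refine integral_congr_ae ?_
  filter_upwards [hy.ae_hasDerivAt_deriv hq, hz.ae_hasDerivAt_deriv hq] with x hy'' hz'' hx
  have hxI : x ∈ Icc 0 π := Ioc_subset_Icc_self ((uIoc_of_le pi_pos.le) ▸ hx)
  rw [(((hy'' hx).fun_mul (hz.2.1 x hxI)).fun_sub ((hy.2.1 x hxI).fun_mul (hz'' hx))).deriv]
  ring

end IsSol

theorem stmt_1_general
    (q : ℝ → ℝ) (hq_meas : Measurable q)
    (hq_L2 : IntegrableOn (fun t => (q t) ^ 2) (Set.Icc 0 π))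
    (h H H₁ H₂ : ℝ) (ρ : ℝ) (hρ : ρ = H * H₁ - H₂) (hρpos : 0 < ρ)
    (ψ ψx : ℝ → ℝ → ℝ)
    (hψ : ∀ lam : ℝ, IsSol q lam (ψ lam) (ψx lam))
    (hψπ : ∀ lam : ℝ, ψ lam π = -lam + H₁)
    (hψxπ : ∀ lam : ℝ, ψx lam π = lam * H - H₂)
    (χ : ℝ → ℝ) (hχ : ∀ lam : ℝ, χ lam = ψx lam 0 - h * ψ lam 0)
    (lamn kn : ℝ)
    (φ φ' : ℝ → ℝ) (hφ : IsSol q lamn φ φ')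
    (hφ0 : φ 0 = 1) (hφ'0 : φ' 0 = h)
    (hk : ∀ x ∈ Set.Icc (0:ℝ) π, ψ lamn x = kn * φ x)
    (hcont : ContinuousAt (fun lam => ∫ x in (0:ℝ)..π, ψ lam x * φ x) lamn)
    (γn : ℝ)
    (hγn : γn = (∫ x in (0:ℝ)..π, (φ x) ^ 2) + (φ' π + H * φ π) ^ 2 / ρ) :
    HasDerivAt χ (kn * γn) lamn := by
  have hq : IntervalIntegrable q volume 0 π :=
    (intervalIntegrable_iff_integrableOn_Icc_of_le pi_pos.le).2 <|
      ((memLp_two_iff_integrable_sq hq_meas.aestronglyMeasurable).2 hq_L2).integrable one_le_two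
  have hχ_slope : ∀ lam, χ lam
      = χ lamn + (lam - lamn) * (H * φ π + φ' π + ∫ x in (0:ℝ)..π, ψ lam x * φ x) := by
    intro lam
    have hW := (hψ lam).wronskian_sub hq hφ
    have hWn := (hψ lamn).wronskian_sub hq hφ
    rw [hφ0, hφ'0, hψπ, hψxπ] at hW hWn
    rw [hχ, hχ]
    linear_combination hWn - hW
  have hπ : π ∈ Icc 0 π := right_mem_Icc.2 pi_pos.le
  have hψxπn : ψx lamn π = kn * φ' π :=
    (uniqueDiffOn_Icc pi_pos π hπ).eq_deriv _ ((hψ lamn).2.1 π hπ).hasDerivWithinAt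
      ((((hφ.2.1 π hπ).const_mul kn).hasDerivWithinAt).congr hk (hk π hπ))
  have hkρ : kn * (φ' π + H * φ π) = ρ := by
    linear_combination -hρ - (hψxπ lamn).symm.trans hψxπn
      - H * (hψπ lamn).symm.trans (hk π hπ)
  have hIn : ∫ x in (0:ℝ)..π, ψ lamn x * φ x = kn * ∫ x in (0:ℝ)..π, φ x ^ 2 := by
    rw [← intervalIntegral.integral_const_mul]
    refine integral_congr fun x hx => ?_
    simp only [hk x (uIcc_of_le pi_pos.le ▸ hx)]
    ring
  have hG : ContinuousAt (fun lam => H * φ π + φ' π + ∫ x in (0:ℝ)..π, ψ lam x * φ x) lamn :=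
    continuousAt_const.add hcont
  refine (hasDerivAt_of_eq_add_sub_mul hG hχ_slope).congr_deriv ?_
  rw [hIn, hγn]
  field_simp
  linear_combination -(φ' π + H * φ π) * hkρ

theorem stmt_1
    (q : ℝ → ℝ) (hq_meas : Measurable q)
    (hq_L2 : IntegrableOn (fun t => (q t) ^ 2) (Set.Icc 0 π))
    (h H H₁ H₂ : ℝ) (ρ : ℝ) (hρ : ρ = H * H₁ - H₂) (hρpos : 0 < ρ)
    (ψ ψx : ℝ → ℝ → ℝ)
    (hψ : ∀ lam : ℝ, IsSol q lam (ψ lam) (ψx lam))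
    (hψπ : ∀ lam : ℝ, ψ lam π = -lam + H₁)
    (hψxπ : ∀ lam : ℝ, ψx lam π = lam * H - H₂)
    (χ : ℝ → ℝ) (hχ : ∀ lam : ℝ, χ lam = ψx lam 0 - h * ψ lam 0)
    (lamn kn : ℝ) (hkn : kn ≠ 0)
    (φ φ' : ℝ → ℝ) (hφ : IsSol q lamn φ φ')
    (hφ0 : φ 0 = 1) (hφ'0 : φ' 0 = h)
    (hk : ∀ x ∈ Set.Icc (0:ℝ) π, ψ lamn x = kn * φ x)
    (hcont : ContinuousAt (fun lam => ∫ x in (0:ℝ)..π, ψ lam x * φ x) lamn)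
    (γn : ℝ)
    (hγn : γn = (∫ x in (0:ℝ)..π, (φ x) ^ 2) + (φ' π + H * φ π) ^ 2 / ρ) :
    HasDerivAt χ (kn * γn) lamn :=
  stmt_1_general q hq_meas hq_L2 h H H₁ H₂ ρ hρ hρpos ψ ψx hψ hψπ hψxπ χ hχ lamn kn φ φ' hφ hφ0 hφ'0
    hk hcont γn hγn
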